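/- Let n ≥ 1, let H be a symmetric positive definite real n×n matrix, θ* ∈ ℝⁿ, J* ∈ ℝ, h₀ ∈ ℝ, and let h₁ ∈ ℝⁿ be nonzero. Define J(θ) := J* + (1/2)(θ − θ*)ᵀH(θ − θ*) and h(θ) := h₀ + h₁ᵀ(θ − θ*), and let C := {θ ∈ ℝⁿ : h(θ) ≥ 0}. Then the infimum of J over C is attained, and it equals J* if h₀ ≥ 0, and equals J* + h₀²/(2 h₁ᵀH⁻¹h₁) if h₀ < 0; moreover if h₀ < 0 the minimum is attained at θ_smin = θ* + (|h₀|/(h₁ᵀH⁻¹h₁)) H⁻¹h₁. -/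

import Mathlib

noncomputable section
open Matrix

/-- The quadratic objective `J(θ) = J* + ½(θ−θ*)ᵀH(θ−θ*)`. -/
def Jfun (n : ℕ) (H : Matrix (Fin n) (Fin n) ℝ) (θs : Fin n → ℝ) (Js : ℝ)
    (θ : Fin n → ℝ) : ℝ :=
  Js + (1 / 2) * ((θ - θs) ⬝ᵥ (H *ᵥ (θ - θs)))

/-- The linear barrier `h(θ) = h₀ + h₁ᵀ(θ−θ*)`. -/
def hfun (n : ℕ) (h₀ : ℝ) (h₁ : Fin n → ℝ) (θs : Fin n → ℝ) (θ : Fin n → ℝ) : ℝ :=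
  h₀ + h₁ ⬝ᵥ (θ - θs)

/-- The minimum of `J` over the safe set `C = {θ : h(θ) ≥ 0}` is attained and equals
`J*` if `h₀ ≥ 0`, and `J* + h₀²/(2h₁ᵀH⁻¹h₁)` if `h₀ < 0`, in which case it is
attained at `θ_smin = θ* + (|h₀|/(h₁ᵀH⁻¹h₁))H⁻¹h₁`. -/
lemma cs_psd {n : ℕ} {H : Matrix (Fin n) (Fin n) ℝ} (hH : H.PosSemidef)
    (x y : Fin n → ℝ) :
    (x ⬝ᵥ (H *ᵥ y)) ^ 2 ≤ (x ⬝ᵥ (H *ᵥ x)) * (y ⬝ᵥ (H *ᵥ y)) := by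
  have hsym : ∀ a b : Fin n → ℝ, a ⬝ᵥ (H *ᵥ b) = b ⬝ᵥ (H *ᵥ a) := by
    intro a b
    have hHt : Hᵀ = H := by simpa using hH.1.eq
    rw [dotProduct_mulVec, ← mulVec_transpose, hHt, dotProduct_comm]
  have key : ∀ t : ℝ, 0 ≤ (y ⬝ᵥ (H *ᵥ y)) * (t * t) + (2 * (x ⬝ᵥ (H *ᵥ y))) * t
      + (x ⬝ᵥ (H *ᵥ x)) := by
    intro t
    have h0 := hH.dotProduct_mulVec_nonneg (x + t • y)
    simp only [star_trivial] at h0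
    have he : (x + t • y) ⬝ᵥ (H *ᵥ (x + t • y)) =
        (y ⬝ᵥ (H *ᵥ y)) * (t * t) + (2 * (x ⬝ᵥ (H *ᵥ y))) * t + (x ⬝ᵥ (H *ᵥ x)) := by
      rw [mulVec_add, mulVec_smul, add_dotProduct, smul_dotProduct,
        dotProduct_add, dotProduct_add, dotProduct_smul, dotProduct_smul,
        hsym y x]
      simp only [smul_eq_mul]
      ring
    linarith [he ▸ h0]
  have hd := discrim_le_zero key
  unfold discrim at hd
  nlinarith [hd]

theorem stmt8 (n : ℕ) (hn : 1 ≤ n)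
    (H : Matrix (Fin n) (Fin n) ℝ) (hH : H.PosDef)
    (θs : Fin n → ℝ) (Js h₀ : ℝ) (h₁ : Fin n → ℝ) (hh₁ : h₁ ≠ 0) :
    (0 ≤ h₀ → IsLeast
      (Jfun n H θs Js '' {θ : Fin n → ℝ | 0 ≤ hfun n h₀ h₁ θs θ}) Js) ∧
    (h₀ < 0 →
      IsLeast (Jfun n H θs Js '' {θ : Fin n → ℝ | 0 ≤ hfun n h₀ h₁ θs θ})
        (Js + h₀ ^ 2 / (2 * (h₁ ⬝ᵥ (H⁻¹ *ᵥ h₁)))) ∧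
      0 ≤ hfun n h₀ h₁ θs (θs + (|h₀| / (h₁ ⬝ᵥ (H⁻¹ *ᵥ h₁))) • (H⁻¹ *ᵥ h₁)) ∧
      Jfun n H θs Js (θs + (|h₀| / (h₁ ⬝ᵥ (H⁻¹ *ᵥ h₁))) • (H⁻¹ *ᵥ h₁)) =
        Js + h₀ ^ 2 / (2 * (h₁ ⬝ᵥ (H⁻¹ *ᵥ h₁)))) := by
  set v : Fin n → ℝ := H⁻¹ *ᵥ h₁ with hv
  set c : ℝ := h₁ ⬝ᵥ v with hcdef
  have hc : 0 < c := by
    have := hH.inv.dotProduct_mulVec_pos hh₁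
    simpa [hcdef, hv] using this
  have hdet : IsUnit H.det := hH.det_pos.ne'.isUnit
  have hHv : H *ᵥ v = h₁ := by
    rw [hv, mulVec_mulVec, Matrix.mul_nonsing_inv H hdet, one_mulVec]
  have hsym : ∀ a b : Fin n → ℝ, a ⬝ᵥ (H *ᵥ b) = b ⬝ᵥ (H *ᵥ a) := by
    intro a b
    have hHt : Hᵀ = H := by simpa using hH.1.eq
    rw [dotProduct_mulVec, ← mulVec_transpose, hHt, dotProduct_comm]
  have hpsd := hH.posSemidef
  have hquad : ∀ θ : Fin n → ℝ, 0 ≤ (θ - θs) ⬝ᵥ (H *ᵥ (θ - θs)) := fun θ => by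
    simpa using hpsd.dotProduct_mulVec_nonneg (θ - θs)
  constructor
  · intro hh0
    constructor
    · refine ⟨θs, ?_, ?_⟩
      · simp [hfun, hh0]
      · simp [Jfun]
    · rintro J ⟨θ, _, rfl⟩
      have := hquad θ
      simp only [Jfun]
      linarith
  · intro hh0
    have habs : |h₀| = -h₀ := abs_of_neg hh0
    -- the candidate point
    have hmem0 : hfun n h₀ h₁ θs (θs + (|h₀| / c) • v) = 0 := by
      simp only [hfun, add_sub_cancel_left, dotProduct_smul, smul_eq_mul, ← hcdef, habs]
      field_simp
      ring
    have hJmin : Jfun n H θs Js (θs + (|h₀| / c) • v) = Js + h₀ ^ 2 / (2 * c) := by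
      simp only [Jfun, add_sub_cancel_left, mulVec_smul, hHv, dotProduct_smul,
        smul_dotProduct, smul_eq_mul]
      have hvh : v ⬝ᵥ h₁ = c := by rw [hcdef, dotProduct_comm]
      rw [hvh, habs]
      field_simp
    refine ⟨⟨⟨θs + (|h₀| / c) • v, by simp [hmem0], hJmin⟩, ?_⟩, le_of_eq hmem0.symm, hJmin⟩
    rintro J ⟨θ, hθ, rfl⟩
    -- lower bound
    set x : Fin n → ℝ := θ - θs with hx
    have hs : -h₀ ≤ h₁ ⬝ᵥ x := by
      simp only [hfun, Set.mem_setOf_eq] at hθ; linarith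
    have hcs := cs_psd hpsd v x
    have h1 : v ⬝ᵥ (H *ᵥ x) = h₁ ⬝ᵥ x := by rw [hsym, hHv, dotProduct_comm]
    have h2 : v ⬝ᵥ (H *ᵥ v) = c := by rw [hHv, dotProduct_comm, hcdef]
    rw [h1, h2] at hcs
    have hs2 : h₀ ^ 2 ≤ (h₁ ⬝ᵥ x) ^ 2 := by nlinarith
    have hxx : h₀ ^ 2 / c ≤ x ⬝ᵥ (H *ᵥ x) := by
      rw [div_le_iff₀ hc]
      nlinarith
    simp only [Jfun, ← hx]
    have : h₀ ^ 2 / (2 * c) = (1 / 2) * (h₀ ^ 2 / c) := by ring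
    rw [this]
    linarith
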